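/- arXiv:1712.02648 — 3 statements merged into one kernel-verified Lean document; each statement's English description precedes it below -/
import Mathlib

section
/- Suppose 1 ≤ R < m and Σ_{k≥1} μ_k R^{−k} < ∞, so that T is a bounded linear operator on ℓ²_R. Then for every complex number λ with |λ| > R, λ belongs to the spectrum of T if and only if λ ≠ m and μ̂(1/λ) = 1. (Note that the series μ̂(1/λ) = Σ_{k≥1} μ_k λ^{−k} converges absolutely since |1/λ| < 1/R.) -/
/-!
Conjugating by `(a_k) ↦ (R^k a_k)` turns `T` into `R • S + χ ⊗ v` on `ℓ²`, a rank-one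
perturbation of `R • S`; since `‖S‖ ≤ 1`, `λ - R • S` is invertible for `|λ| > R`. Hence
`λ ∈ σ(T)` iff `χ(x) = 1` for `x = (λ - S)⁻¹ v`, i.e. `x_0 = 0`, `λ x_{k+1} = x_k + m^{-(k+1)}`.
Summing the recursion against `μ` gives `χ(x) - 1 = (λ⁻¹ - 1)(A + 1)` with `A = Σ μ_{k+1} x_k`.
For `λ ≠ m` the closed form `(λ - m) x_k = m^{-k} - λ^{-k}` gives
`λ μ̂(1/λ) = λ - (λ - m)(A + 1)`; for `λ = m` one has `x_k = k m^{-(k+1)} ≥ 0`, so `A + 1 ≠ 0`.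
-/

open scoped BigOperators ENNReal

noncomputable section

abbrev H2 : Type := lp (fun _ : ℕ => ℂ) 2

/-- the vector `v = (m^{-k} 1[k ≥ 1])_k` -/
def vSeq (m : ℝ) : ℕ → ℂ := fun k => if k = 0 then 0 else ((m : ℂ))⁻¹ ^ k

/-- the shift `S` -/
def shiftSeq (a : ℕ → ℂ) : ℕ → ℂ := fun k => if k = 0 then 0 else a (k - 1)

/-- the terms of the series defining `χ(a)` -/
def chiSum (μ : ℕ → ℝ) (a : ℕ → ℂ) : ℕ → ℂ := fun k => (μ (k+1) : ℂ) * (a (k+1) - a k)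

/-- the linear functional `χ` -/
def chiSeq (μ : ℕ → ℝ) (a : ℕ → ℂ) : ℂ := ∑' k, chiSum μ a k

/-- the operator `T = S + χ(·) v` -/
def Tseq (μ : ℕ → ℝ) (m : ℝ) (a : ℕ → ℂ) : ℕ → ℂ :=
  fun k => shiftSeq a k + chiSeq μ a * vSeq m k

/-- membership in `ℓ²_R` -/
def memEllR (R : ℝ) (a : ℕ → ℂ) : Prop :=
  Summable fun k => R ^ (2 * k) * ‖a k‖ ^ 2

/-- from the standard `ℓ²` model to an `ℓ²_R` sequence -/
def fromModel (R : ℝ) (b : ℕ → ℂ) : ℕ → ℂ := fun k => ((R : ℂ))⁻¹ ^ k * b k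

/-- from an `ℓ²_R` sequence to its standard `ℓ²` model -/
def toModel (R : ℝ) (a : ℕ → ℂ) : ℕ → ℂ := fun k => (R : ℂ) ^ k * a k

/-- the generating function `μ̂(z) = Σ_{k≥1} μ_k z^k` -/
def genFun (μ : ℕ → ℝ) (z : ℂ) : ℂ := ∑' k, (μ (k+1) : ℂ) * z ^ (k+1)

/-- `T'` is the bounded operator on the standard `ℓ²` model corresponding to `T` on `ℓ²_R`
under the isometric isomorphism `(a_k)_k ↦ (R^k a_k)_k`. -/
def Intertwines (μ : ℕ → ℝ) (m R : ℝ) (T' : H2 →L[ℂ] H2) : Prop :=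
  ∀ b : H2, ∀ k, (T' b : ℕ → ℂ) k = toModel R (Tseq μ m (fromModel R (b : ℕ → ℂ))) k

section RankOne

open ContinuousLinearMap

variable {𝕜 E : Type*} [NontriviallyNormedField 𝕜] [NormedAddCommGroup E] [NormedSpace 𝕜 E]

theorem isUnit_one_sub_smulRight_iff (φ : E →L[𝕜] 𝕜) (u : E) :
    IsUnit (1 - φ.smulRight u) ↔ φ u ≠ 1 := by
  constructor
  · rintro ⟨U, hU⟩ hφu
    have hu : u ≠ 0 := by rintro rfl; simp at hφu
    have hker : (U : E →L[𝕜] E) u = 0 := by simp [hU, hφu]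
    apply hu
    rw [← one_apply_eq_self (F := E →L[𝕜] E) u, ← U.inv_mul, mul_apply_eq_comp, hker, map_zero]
  · intro hφu
    have hc : (1 - φ u)⁻¹ * (1 - φ u) = 1 := inv_mul_cancel₀ (sub_ne_zero.2 hφu.symm)
    refine ⟨⟨1 - φ.smulRight u, 1 + (1 - φ u)⁻¹ • φ.smulRight u, ?_, ?_⟩, rfl⟩ <;>
    · ext x
      simp only [mul_apply_eq_comp, add_apply, one_apply_eq_self, sub_apply, smulRight_apply,
        smul_apply, map_add, map_smul, map_sub, smul_smul]
      match_scalars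
      · ring
      · linear_combination φ x * hc

theorem isUnit_sub_smulRight_iff {D : E →L[𝕜] E} (hD : IsUnit D) (φ : E →L[𝕜] 𝕜) {u v : E}
    (hDu : D u = v) : IsUnit (D - φ.smulRight v) ↔ φ u ≠ 1 := by
  have hfactor : D - φ.smulRight v = D * (1 - φ.smulRight u) := by
    ext x; simp [← hDu]
  rw [hfactor, hD.mul_left_iff, isUnit_one_sub_smulRight_iff]

end RankOne

theorem memℓp_of_norm_le_geometric {E : Type*} [NormedAddCommGroup E] {p : ℝ≥0∞} (hp : 1 ≤ p)
    {f : ℕ → E} {q : ℝ} (hq : q < 1) (hf : ∀ k, ‖f k‖ ≤ q ^ k) : Memℓp f p := by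
  have hq0 : 0 ≤ q := by simpa using (norm_nonneg _).trans (hf 1)
  refine Memℓp.of_exponent_ge (memℓp_gen ?_) hp
  simpa using (summable_geometric_of_lt_one hq0 hq).of_nonneg_of_le (fun _ => norm_nonneg _) hf

section Shift

theorem memℓp_shiftSeq (b : H2) : Memℓp (shiftSeq b) 2 := by
  refine memℓp_gen ((summable_nat_add_iff 1).mp ?_)
  simpa [shiftSeq] using (lp.memℓp b).summable (by norm_num)

theorem norm_shiftSeq_le (b : H2) : ‖(⟨shiftSeq b, memℓp_shiftSeq b⟩ : H2)‖ ≤ ‖b‖ := by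
  have hp : 0 < (2 : ℝ≥0∞).toReal := by norm_num
  refine lp.norm_le_of_tsum_le hp (norm_nonneg b) (le_of_eq ?_)
  rw [(memℓp_shiftSeq b).summable hp |>.tsum_eq_zero_add, lp.norm_rpow_eq_tsum hp]
  simp [shiftSeq]

def shiftCLM : H2 →L[ℂ] H2 :=
  LinearMap.mkContinuous
    { toFun := fun b => ⟨shiftSeq b, memℓp_shiftSeq b⟩
      map_add' := fun b c => by
        ext k
        change shiftSeq ⇑(b + c) k = shiftSeq b k + shiftSeq c k
        cases k <;> simp [shiftSeq]
      map_smul' := fun c b => by ext k; cases k <;> simp [shiftSeq] }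
    1 (fun b => by simpa using norm_shiftSeq_le b)

theorem shiftCLM_apply (b : H2) : (shiftCLM b : ℕ → ℂ) = shiftSeq b := rfl

theorem norm_shiftCLM_le : ‖shiftCLM‖ ≤ 1 :=
  LinearMap.mkContinuous_norm_le _ zero_le_one _

end Shift

section Functional

variable {μ : ℕ → ℝ} {R C : ℝ} {x : ℕ → ℂ}

theorem chiSeq_add {y : ℕ → ℂ} (hx : Summable (chiSum μ x))
    (hy : Summable (chiSum μ y)) : chiSeq μ (x + y) = chiSeq μ x + chiSeq μ y := by
  rw [chiSeq, chiSeq, chiSeq, ← hx.tsum_add hy]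
  congr 1 with k
  simp only [chiSum, Pi.add_apply]
  ring

theorem chiSeq_smul (c : ℂ) : chiSeq μ (c • x) = c * chiSeq μ x := by
  rw [chiSeq, chiSeq, ← tsum_mul_left]
  congr 1 with k
  simp only [chiSum, Pi.smul_apply, smul_eq_mul]
  ring

theorem norm_mu_mul_le (hR : 0 < R) (hμnn : ∀ k, 0 ≤ μ k) (hx : ∀ k, ‖x k‖ ≤ C * R⁻¹ ^ k)
    (k : ℕ) : ‖(μ (k + 1) : ℂ) * x k‖ ≤ R * C * (μ (k + 1) * R⁻¹ ^ (k + 1)) := by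
  rw [norm_mul, Complex.norm_real, Real.norm_of_nonneg (hμnn _), pow_succ]
  calc μ (k + 1) * ‖x k‖ ≤ μ (k + 1) * (C * R⁻¹ ^ k) := by gcongr; exacts [hμnn _, hx k]
    _ = R * C * (μ (k + 1) * (R⁻¹ ^ k * R⁻¹)) := by field_simp

theorem norm_chiSum_le (hR : 0 < R) (hμnn : ∀ k, 0 ≤ μ k) (hx : ∀ k, ‖x k‖ ≤ C * R⁻¹ ^ k)
    (k : ℕ) : ‖chiSum μ x k‖ ≤ (1 + R) * C * (μ (k + 1) * R⁻¹ ^ (k + 1)) := by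
  have hnext : ‖(μ (k + 1) : ℂ) * x (k + 1)‖ ≤ C * (μ (k + 1) * R⁻¹ ^ (k + 1)) := by
    rw [norm_mul, Complex.norm_real, Real.norm_of_nonneg (hμnn _)]
    nlinarith [hx (k + 1), hμnn (k + 1)]
  rw [chiSum, mul_sub]
  linarith [norm_sub_le ((μ (k + 1) : ℂ) * x (k + 1)) (μ (k + 1) * x k),
    norm_mu_mul_le hR hμnn hx k]

variable (hR : 0 < R) (hμnn : ∀ k, 0 ≤ μ k)
  (hμR : Summable fun k : ℕ => μ (k + 1) * R⁻¹ ^ (k + 1))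
include hR hμnn hμR

theorem summable_mu_mul (hx : ∀ k, ‖x k‖ ≤ C * R⁻¹ ^ k) :
    Summable fun k => (μ (k + 1) : ℂ) * x k :=
  (hμR.mul_left _).of_norm_bounded (norm_mu_mul_le hR hμnn hx)

theorem summable_chiSum (hx : ∀ k, ‖x k‖ ≤ C * R⁻¹ ^ k) : Summable (chiSum μ x) :=
  (hμR.mul_left _).of_norm_bounded (norm_chiSum_le hR hμnn hx)

theorem norm_chiSeq_le (hx : ∀ k, ‖x k‖ ≤ C * R⁻¹ ^ k) :
    ‖chiSeq μ x‖ ≤ (1 + R) * (∑' k, μ (k + 1) * R⁻¹ ^ (k + 1)) * C := by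
  rw [mul_right_comm]
  exact tsum_of_norm_bounded (hμR.hasSum.mul_left _) (norm_chiSum_le hR hμnn hx)

end Functional

section Resolvent

variable {μ : ℕ → ℝ} {m : ℝ} {lam A : ℂ} {x : ℕ → ℂ}

theorem resolvent_zero (hlam : lam ≠ 0) (hx : ∀ k, lam * x k - shiftSeq x k = vSeq m k) :
    x 0 = 0 := by
  simpa [shiftSeq, vSeq, hlam] using hx 0

theorem resolvent_succ (hx : ∀ k, lam * x k - shiftSeq x k = vSeq m k) (k : ℕ) :
    lam * x (k + 1) = x k + (m : ℂ)⁻¹ ^ (k + 1) := by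
  linear_combination (by simpa [shiftSeq, vSeq] using hx (k + 1) :
    lam * x (k + 1) - x k = (m : ℂ)⁻¹ ^ (k + 1))

theorem sub_mul_resolvent (hlam : lam ≠ 0) (hm : (m : ℂ) ≠ 0)
    (hx : ∀ k, lam * x k - shiftSeq x k = vSeq m k) (k : ℕ) :
    (lam - m) * x k = (m : ℂ)⁻¹ ^ k - lam⁻¹ ^ k := by
  induction k with
  | zero => simp [resolvent_zero hlam hx]
  | succ k ih =>
    have hmm : (m : ℂ) * (m : ℂ)⁻¹ = 1 := mul_inv_cancel₀ hm
    have hll : lam⁻¹ * lam = 1 := inv_mul_cancel₀ hlam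
    linear_combination (-(lam - m) * x (k + 1) + (m : ℂ)⁻¹ ^ (k + 1)) * hll
      + lam⁻¹ * (lam - m) * resolvent_succ hx k + lam⁻¹ * ih - lam⁻¹ * (m : ℂ)⁻¹ ^ k * hmm

theorem resolvent_of_eq (hm : (m : ℂ) ≠ 0) (hx : ∀ k, (m : ℂ) * x k - shiftSeq x k = vSeq m k)
    (k : ℕ) : x k = k * (m : ℂ)⁻¹ ^ (k + 1) := by
  induction k with
  | zero => simp [resolvent_zero hm hx]
  | succ k ih =>
    have hmm : (m : ℂ)⁻¹ * m = 1 := inv_mul_cancel₀ hm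
    push_cast
    linear_combination (m : ℂ)⁻¹ * resolvent_succ hx k + (m : ℂ)⁻¹ * ih - x (k + 1) * hmm

theorem hasSum_mu_mul_inv_pow (hμm : HasSum (fun k => μ (k + 1) * m⁻¹ ^ (k + 1)) 1) :
    HasSum (fun k => (μ (k + 1) : ℂ) * (m : ℂ)⁻¹ ^ (k + 1)) 1 := by
  have h := Complex.hasSum_ofReal.mpr hμm
  push_cast at h
  exact h

theorem chiSeq_sub_one_of_resolvent (hlam : lam ≠ 0)
    (hμm : HasSum (fun k => μ (k + 1) * m⁻¹ ^ (k + 1)) 1)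
    (hx : ∀ k, lam * x k - shiftSeq x k = vSeq m k)
    (hA : HasSum (fun k => (μ (k + 1) : ℂ) * x k) A) :
    chiSeq μ x - 1 = (lam⁻¹ - 1) * (A + 1) := by
  have hterm (k : ℕ) : chiSum μ x k = (lam⁻¹ - 1) * ((μ (k + 1) : ℂ) * x k)
      + lam⁻¹ * ((μ (k + 1) : ℂ) * (m : ℂ)⁻¹ ^ (k + 1)) := by
    have hll : lam⁻¹ * lam = 1 := inv_mul_cancel₀ hlam
    rw [chiSum]
    linear_combination (μ (k + 1) : ℂ) * lam⁻¹ * resolvent_succ hx k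
      - (μ (k + 1) : ℂ) * x (k + 1) * hll
  have hsum := (hA.mul_left (lam⁻¹ - 1)).add ((hasSum_mu_mul_inv_pow hμm).mul_left lam⁻¹)
  rw [chiSeq, tsum_congr hterm, hsum.tsum_eq]
  ring

theorem mul_genFun_inv_of_resolvent (hlam : lam ≠ 0) (hm : (m : ℂ) ≠ 0)
    (hμm : HasSum (fun k => μ (k + 1) * m⁻¹ ^ (k + 1)) 1)
    (hx : ∀ k, lam * x k - shiftSeq x k = vSeq m k)
    (hA : HasSum (fun k => (μ (k + 1) : ℂ) * x k) A) :
    lam * genFun μ lam⁻¹ = lam - (lam - m) * (A + 1) := by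
  have hterm (k : ℕ) : (μ (k + 1) : ℂ) * lam⁻¹ ^ (k + 1)
      = lam⁻¹ * (m * ((μ (k + 1) : ℂ) * (m : ℂ)⁻¹ ^ (k + 1))
        - (lam - m) * ((μ (k + 1) : ℂ) * x k)) := by
    have hmm : (m : ℂ) * (m : ℂ)⁻¹ = 1 := mul_inv_cancel₀ hm
    linear_combination (μ (k + 1) : ℂ) * lam⁻¹ * sub_mul_resolvent hlam hm hx k
      - (μ (k + 1) : ℂ) * lam⁻¹ * (m : ℂ)⁻¹ ^ k * hmm
  have hsum := (((hasSum_mu_mul_inv_pow hμm).mul_left (m : ℂ)).sub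
    (hA.mul_left (lam - m))).mul_left lam⁻¹
  rw [genFun, tsum_congr hterm, hsum.tsum_eq]
  field_simp
  ring

theorem add_one_ne_zero_of_resolvent_self (hm : 0 < m) (hμnn : ∀ k, 0 ≤ μ k)
    (hx : ∀ k, (m : ℂ) * x k - shiftSeq x k = vSeq m k)
    (hA : HasSum (fun k => (μ (k + 1) : ℂ) * x k) A) : A + 1 ≠ 0 := by
  have hm0 : (m : ℂ) ≠ 0 := Complex.ofReal_ne_zero.2 hm.ne'
  have hre : 0 ≤ A.re := by
    refine (Complex.hasSum_re hA).nonneg fun k => ?_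
    rw [resolvent_of_eq hm0 hx k]
    norm_cast
    have := hμnn (k + 1)
    positivity
  intro h
  rw [add_eq_zero_iff_eq_neg] at h
  norm_num [h] at hre

theorem chiSeq_eq_one_iff_of_resolvent (hm : 0 < m) (hμnn : ∀ k, 0 ≤ μ k)
    (hμm : HasSum (fun k => μ (k + 1) * m⁻¹ ^ (k + 1)) 1) (hlam : 1 < ‖lam‖)
    (hx : ∀ k, lam * x k - shiftSeq x k = vSeq m k)
    (hA : Summable fun k => (μ (k + 1) : ℂ) * x k) :
    chiSeq μ x = 1 ↔ lam ≠ m ∧ genFun μ lam⁻¹ = 1 := by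
  have hlam0 : lam ≠ 0 := norm_pos_iff.1 (zero_lt_one.trans hlam)
  have hlam1 : lam⁻¹ - 1 ≠ 0 := by
    rw [sub_ne_zero, Ne, inv_eq_one]
    rintro rfl
    simp at hlam
  rw [← sub_eq_zero, chiSeq_sub_one_of_resolvent hlam0 hμm hx hA.hasSum, mul_eq_zero,
    or_iff_right hlam1]
  rcases eq_or_ne lam m with rfl | hne
  · simp [add_one_ne_zero_of_resolvent_self hm hμnn hx hA.hasSum]
  · have hm0 : (m : ℂ) ≠ 0 := Complex.ofReal_ne_zero.2 hm.ne'
    have hgenFun : genFun μ lam⁻¹ = 1 ↔ ∑' k, (μ (k + 1) : ℂ) * x k + 1 = 0 := by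
      rw [← mul_right_inj' hlam0, mul_one, mul_genFun_inv_of_resolvent hlam0 hm0 hμm hx hA.hasSum,
        sub_eq_self, mul_eq_zero, or_iff_right (sub_ne_zero.2 hne)]
    rw [hgenFun]
    exact ⟨fun h => ⟨hne, h⟩, And.right⟩

end Resolvent

section Model

variable {μ : ℕ → ℝ} {m R : ℝ}

theorem norm_fromModel_le (hR : 0 < R) (b : H2) (k : ℕ) :
    ‖fromModel R b k‖ ≤ ‖b‖ * R⁻¹ ^ k := by
  rw [fromModel, norm_mul, norm_pow, norm_inv, Complex.norm_real, Real.norm_of_nonneg hR.le,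
    mul_comm]
  gcongr
  exact lp.norm_apply_le_norm two_ne_zero b k

theorem exists_clm_eq_chiSeq_fromModel (hR : 0 < R)
    (hμnn : ∀ k, 0 ≤ μ k) (hμR : Summable fun k : ℕ => μ (k + 1) * R⁻¹ ^ (k + 1)) :
    ∃ χ : H2 →L[ℂ] ℂ, ∀ b, χ b = chiSeq μ (fromModel R b) := by
  have hsum (b : H2) := summable_chiSum hR hμnn hμR (norm_fromModel_le hR b)
  refine ⟨LinearMap.mkContinuous
    { toFun := fun b => chiSeq μ (fromModel R b)
      map_add' := fun b c => by
        rw [← chiSeq_add (hsum b) (hsum c)]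
        congr 1 with k
        simp [fromModel, mul_add]
      map_smul' := fun c b => by
        rw [RingHom.id_apply, smul_eq_mul, ← chiSeq_smul]
        congr 1 with k
        simp [fromModel, mul_left_comm] }
    _ (fun b => norm_chiSeq_le hR hμnn hμR (norm_fromModel_le hR b)), fun b => rfl⟩

theorem toModel_fromModel (hR : R ≠ 0) (b : ℕ → ℂ) : toModel R (fromModel R b) = b := by
  ext k
  simp [toModel, fromModel, hR]

theorem toModel_shiftSeq (a : ℕ → ℂ) :
    toModel R (shiftSeq a) = (R : ℂ) • shiftSeq (toModel R a) := by
  ext (_ | k) <;> simp [toModel, shiftSeq, pow_succ]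
  ring

theorem memℓp_toModel_vSeq (hR : 0 ≤ R) (hRm : R < m) : Memℓp (toModel R (vSeq m)) 2 := by
  have hm : 0 < m := hR.trans_lt hRm
  refine memℓp_of_norm_le_geometric one_le_two ((div_lt_one hm).2 hRm) fun k => ?_
  rcases k with _ | k
  · simp [toModel, vSeq]
  · simp [toModel, vSeq, abs_of_nonneg hR, abs_of_pos hm, div_eq_mul_inv, mul_pow]

theorem Intertwines.eq_smul_shiftCLM_add_smulRight {T' : H2 →L[ℂ] H2} (hT' : Intertwines μ m R T')
    (hR : R ≠ 0) {χ : H2 →L[ℂ] ℂ} (hχ : ∀ b, χ b = chiSeq μ (fromModel R b)) {v : H2}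
    (hv : ⇑v = toModel R (vSeq m)) : T' = (R : ℂ) • shiftCLM + χ.smulRight v := by
  ext b k
  have hshift := congrFun (toModel_shiftSeq (R := R) (fromModel R b)) k
  rw [toModel_fromModel hR] at hshift
  rw [hT' b k]
  simp only [toModel, Tseq, mul_add] at hshift ⊢
  simp only [add_apply, smul_apply, ContinuousLinearMap.smulRight_apply, lp.coeFn_add,
    lp.coeFn_smul, Pi.add_apply, Pi.smul_apply, shiftCLM_apply, hshift, hχ, hv, toModel,
    smul_eq_mul]
  ring

theorem isUnit_algebraMap_sub_smul_shiftCLM {lam : ℂ} (hR : 0 ≤ R) (hlam : R < ‖lam‖) :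
    IsUnit (algebraMap ℂ (H2 →L[ℂ] H2) lam - (R : ℂ) • shiftCLM) := by
  refine spectrum.mem_resolventSet_of_norm_lt_mul ?_
  calc ‖(R : ℂ) • shiftCLM‖ * ‖(1 : H2 →L[ℂ] H2)‖ ≤ R * 1 * 1 := by
        rw [norm_smul, Complex.norm_real, Real.norm_of_nonneg hR]
        gcongr
        exacts [norm_shiftCLM_le, ContinuousLinearMap.norm_id_le]
    _ < ‖lam‖ := by simpa using hlam

theorem resolvent_fromModel (hR : R ≠ 0) {lam : ℂ} {a v : H2}
    (ha : (algebraMap ℂ (H2 →L[ℂ] H2) lam - (R : ℂ) • shiftCLM) a = v)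
    (hv : ⇑v = toModel R (vSeq m)) (k : ℕ) :
    lam * fromModel R a k - shiftSeq (fromModel R a) k = vSeq m k := by
  have hak : (a : ℕ → ℂ) k = R ^ k * fromModel R a k :=
    (congrFun (toModel_fromModel hR a) k).symm
  have hk : lam * a k - R * shiftSeq a k = R ^ k * vSeq m k := by
    rw [Algebra.algebraMap_eq_smul_one, sub_apply, smul_apply, smul_apply, one_apply_eq_self] at ha
    have := congrArg (fun f : H2 => (f : ℕ → ℂ) k) ha
    simpa only [lp.coeFn_sub, lp.coeFn_smul, Pi.sub_apply, Pi.smul_apply, smul_eq_mul,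
      shiftCLM_apply, hv, toModel] using this
  have hshift : R ^ k * shiftSeq (fromModel R a) k = R * shiftSeq a k := by
    simpa [toModel_fromModel hR, toModel]
      using congrFun (toModel_shiftSeq (R := R) (fromModel R a)) k
  refine mul_left_cancel₀ (pow_ne_zero k (Complex.ofReal_ne_zero.2 hR)) ?_
  linear_combination hk - lam * hak - hshift

end Model

/-- Under the standing hypotheses, for `|λ| > R`:
`λ` is in the spectrum of `T` iff `λ ≠ m` and `μ̂(1/λ) = 1`. -/
theorem statement1
    (μ : ℕ → ℝ) (m R : ℝ)
    (hm : 1 < m) (hμnn : ∀ k, 0 ≤ μ k)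
    (hμm : HasSum (fun k : ℕ => μ (k + 1) * (m⁻¹) ^ (k + 1)) 1)
    (hR1 : 1 ≤ R) (hRm : R < m)
    (hμR : Summable fun k : ℕ => μ (k + 1) * (R⁻¹) ^ (k + 1))
    (T' : H2 →L[ℂ] H2) (hT' : Intertwines μ m R T')
    (lam : ℂ) (hlam : R < ‖lam‖) :
    lam ∈ spectrum ℂ T' ↔ (lam ≠ (m : ℂ) ∧ genFun μ lam⁻¹ = 1) := by
  have hR : 0 < R := zero_lt_one.trans_le hR1
  obtain ⟨χ, hχ⟩ := exists_clm_eq_chiSeq_fromModel hR hμnn hμR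
  let v : H2 := ⟨toModel R (vSeq m), memℓp_toModel_vSeq hR.le hRm⟩
  have hD := isUnit_algebraMap_sub_smul_shiftCLM hR.le hlam
  set D := algebraMap ℂ (H2 →L[ℂ] H2) lam - (R : ℂ) • shiftCLM
  set a := (↑hD.unit⁻¹ : H2 →L[ℂ] H2) v
  have hDa : D a = v := by
    rw [← mul_apply_eq_comp, hD.mul_val_inv, one_apply_eq_self]
  have hsplit : algebraMap ℂ (H2 →L[ℂ] H2) lam - T' = D - χ.smulRight v := by
    rw [hT'.eq_smul_shiftCLM_add_smulRight hR.ne' hχ (v := v) rfl, sub_add_eq_sub_sub]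
  rw [spectrum.mem_iff, hsplit, isUnit_sub_smulRight_iff hD χ hDa, not_not, hχ]
  exact chiSeq_eq_one_iff_of_resolvent (zero_lt_one.trans hm) hμnn hμm (hR1.trans_lt hlam)
    (resolvent_fromModel hR.ne' hDa rfl) (summable_mu_mul hR hμnn hμR (norm_fromModel_le hR a))
end
end

section
/- Suppose 1 ≤ R < m and Σ_{k≥1} μ_k R^{−k} < ∞. Let γ be a complex number with 0 < |γ| < 1/R, γ ≠ 1/m, and μ̂(γ) = 1. Then the sequence u_γ := (γ^k − m^{−k})_{k≥0} is a nonzero element of ℓ²_R and is an eigenvector of T with eigenvalue 1/γ, i.e., T(u_γ) = γ^{−1}·u_γ. -/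
open scoped BigOperators ENNReal

noncomputable section

/-!
For a root `z ≠ 0` of `μ̂ = 1`, the geometric sequence `(z^k)_k` has
`χ(z^·) = Σ μ_k (z^k - z^{k-1}) = (1 - z⁻¹) μ̂(z) = 1 - z⁻¹`. Since `1/m` is also such a root,
`χ(u_γ) = m - γ⁻¹`, and then `T u_γ = γ⁻¹ u_γ` is a coordinatewise identity. Membership in `ℓ²_R`
holds because both `|γ|` and `1/m` are smaller than `1/R`.
-/

theorem memEllR_geometric {R : ℝ} {z : ℂ} (h : |R| * ‖z‖ < 1) : memEllR R (fun k => z ^ k) := by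
  have hsq : (R * ‖z‖) ^ 2 < 1 := by
    rw [← sq_abs, abs_mul, abs_norm]
    exact pow_lt_one₀ (by positivity) h two_ne_zero
  refine (summable_geometric_of_lt_one (sq_nonneg _) hsq).congr fun k => ?_
  rw [norm_pow]
  ring

theorem memEllR.sub {R : ℝ} {a b : ℕ → ℂ} (ha : memEllR R a) (hb : memEllR R b) :
    memEllR R (fun k => a k - b k) := by
  have hR (k : ℕ) : 0 ≤ R ^ (2 * k) := by rw [pow_mul]; positivity
  refine ((ha.add hb).mul_left 2).of_nonneg_of_le (fun k => by have := hR k; positivity) fun k => ?_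
  have hab : ‖a k - b k‖ ^ 2 ≤ 2 * (‖a k‖ ^ 2 + ‖b k‖ ^ 2) := by
    nlinarith [norm_sub_le (a k) (b k), norm_nonneg (a k - b k), sq_nonneg (‖a k‖ - ‖b k‖)]
  calc R ^ (2 * k) * ‖a k - b k‖ ^ 2 ≤ R ^ (2 * k) * (2 * (‖a k‖ ^ 2 + ‖b k‖ ^ 2)) :=
        mul_le_mul_of_nonneg_left hab (hR k)
    _ = 2 * (R ^ (2 * k) * ‖a k‖ ^ 2 + R ^ (2 * k) * ‖b k‖ ^ 2) := by ring

section Chi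

variable (μ : ℕ → ℝ)

/-- `tsum` of a non-summable family is `0`, so `μ̂(z) ≠ 0` already forces convergence. -/
theorem hasSum_genFun {z : ℂ} (hz : genFun μ z ≠ 0) :
    HasSum (fun k => (μ (k + 1) : ℂ) * z ^ (k + 1)) (genFun μ z) :=
  (by_contra fun h => hz (tsum_eq_zero_of_not_summable h) : Summable _).hasSum

theorem chiSum_sub (a b : ℕ → ℂ) :
    chiSum μ (fun k => a k - b k) = chiSum μ a - chiSum μ b := by
  ext k
  simp only [chiSum, Pi.sub_apply]
  ring

theorem hasSum_chiSum_geometric {z s : ℂ} (hz : z ≠ 0)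
    (h : HasSum (fun k => (μ (k + 1) : ℂ) * z ^ (k + 1)) s) :
    HasSum (chiSum μ (fun k => z ^ k)) ((1 - z⁻¹) * s) := by
  refine (h.mul_left (1 - z⁻¹)).congr_fun fun k => ?_
  simp only [chiSum]
  field_simp
  ring

theorem hasSum_chiSum_sub_geometric {z w : ℂ} (hz : z ≠ 0) (hw : w ≠ 0)
    (hzs : HasSum (fun k => (μ (k + 1) : ℂ) * z ^ (k + 1)) 1)
    (hws : HasSum (fun k => (μ (k + 1) : ℂ) * w ^ (k + 1)) 1) :
    HasSum (chiSum μ (fun k => z ^ k - w ^ k)) (w⁻¹ - z⁻¹) := by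
  have h := (hasSum_chiSum_geometric μ hz hzs).sub (hasSum_chiSum_geometric μ hw hws)
  rw [show (1 - z⁻¹) * 1 - (1 - w⁻¹) * 1 = w⁻¹ - z⁻¹ by ring] at h
  rw [chiSum_sub]
  exact h

theorem Tseq_sub_geometric {m : ℝ} {γ : ℂ} (hm : m ≠ 0) (hγ : γ ≠ 0)
    (hχ : chiSeq μ (fun k => γ ^ k - ((m : ℂ))⁻¹ ^ k) = m - γ⁻¹) (k : ℕ) :
    Tseq μ m (fun k => γ ^ k - ((m : ℂ))⁻¹ ^ k) k = γ⁻¹ * (γ ^ k - ((m : ℂ))⁻¹ ^ k) := by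
  rcases k with _ | n
  · simp [Tseq, shiftSeq, vSeq]
  · simp only [Tseq, shiftSeq, vSeq, hχ, Nat.succ_ne_zero, if_false, Nat.add_sub_cancel]
    have hm' : (m : ℂ) * (m : ℂ)⁻¹ = 1 := mul_inv_cancel₀ (Complex.ofReal_ne_zero.mpr hm)
    field_simp
    linear_combination γ * ((m : ℂ))⁻¹ ^ n * hm'

end Chi

theorem statement5_general
    (μ : ℕ → ℝ) (m R : ℝ)
    (hμm : HasSum (fun k : ℕ => μ (k + 1) * (m⁻¹) ^ (k + 1)) 1)
    (hRm : R < m)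
    (γ : ℂ) (hγR : ‖γ‖ < R⁻¹) (hγm : γ ≠ ((m : ℂ))⁻¹)
    (hγroot : genFun μ γ = 1) :
    memEllR R (fun k => γ ^ k - ((m : ℂ))⁻¹ ^ k) ∧
    (fun k : ℕ => γ ^ k - ((m : ℂ))⁻¹ ^ k) ≠ 0 ∧
    Summable (chiSum μ (fun k => γ ^ k - ((m : ℂ))⁻¹ ^ k)) ∧
    ∀ k, Tseq μ m (fun k => γ ^ k - ((m : ℂ))⁻¹ ^ k) k =
      γ⁻¹ * (γ ^ k - ((m : ℂ))⁻¹ ^ k) := by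
  have hR : 0 < R := inv_pos.mp ((norm_nonneg γ).trans_lt hγR)
  have hm : 0 < m := hR.trans hRm
  have hγ : γ ≠ 0 := by rintro rfl; simp [genFun] at hγroot
  have hγs := hasSum_genFun μ (hγroot ▸ one_ne_zero)
  rw [hγroot] at hγs
  have hms : HasSum (fun k => (μ (k + 1) : ℂ) * ((m : ℂ))⁻¹ ^ (k + 1)) 1 := by
    simpa using Complex.hasSum_ofReal.mpr hμm
  have hχ := hasSum_chiSum_sub_geometric μ hγ (by simpa using hm.ne') hγs hms
  rw [inv_inv] at hχ
  refine ⟨(memEllR_geometric ?_).sub (memEllR_geometric ?_), fun h => ?_, hχ.summable,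
    Tseq_sub_geometric μ hm.ne' hγ hχ.tsum_eq⟩
  · rw [abs_of_pos hR]
    exact (mul_lt_mul_of_pos_left hγR hR).trans_eq (mul_inv_cancel₀ hR.ne')
  · rw [abs_of_pos hR, norm_inv, Complex.norm_real, Real.norm_of_nonneg hm.le,
      ← div_eq_mul_inv, div_lt_one hm]
    exact hRm
  · exact hγm (sub_eq_zero.mp (by simpa using congrFun h 1))

/-- If `0 < |γ| < 1/R`, `γ ≠ 1/m` and `μ̂(γ) = 1`, then
`u_γ = (γ^k − m^{-k})_k` is a nonzero element of `ℓ²_R` and `T(u_γ) = γ⁻¹ u_γ`. -/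
theorem statement5
    (μ : ℕ → ℝ) (m R : ℝ)
    (hm : 1 < m) (hμnn : ∀ k, 0 ≤ μ k)
    (hμm : HasSum (fun k : ℕ => μ (k + 1) * (m⁻¹) ^ (k + 1)) 1)
    (hR1 : 1 ≤ R) (hRm : R < m)
    (hμR : Summable fun k : ℕ => μ (k + 1) * (R⁻¹) ^ (k + 1))
    (γ : ℂ) (hγ0 : 0 < ‖γ‖) (hγR : ‖γ‖ < R⁻¹) (hγm : γ ≠ ((m : ℂ))⁻¹)
    (hγroot : genFun μ γ = 1) :
    memEllR R (fun k => γ ^ k - ((m : ℂ))⁻¹ ^ k) ∧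
    (fun k : ℕ => γ ^ k - ((m : ℂ))⁻¹ ^ k) ≠ 0 ∧
    Summable (chiSum μ (fun k => γ ^ k - ((m : ℂ))⁻¹ ^ k)) ∧
    ∀ k, Tseq μ m (fun k => γ ^ k - ((m : ℂ))⁻¹ ^ k) k =
      γ⁻¹ * (γ ^ k - ((m : ℂ))⁻¹ ^ k) :=
  statement5_general μ m R hμm hRm γ hγR hγm hγroot
end
end

section
/- Suppose 1 ≤ R < m and Σ_{k≥1} μ_k R^{−k} < ∞. Let λ be a complex number with |λ| > R and μ̂(1/λ) ≠ 1. Then the sequence f := ((1−λ)⁻¹·(1 − μ̂(1/λ))⁻¹·(λ^{−k} − m^{−k}))_{k≥0} belongs to ℓ²_R and satisfies (λ·Id − T)(f) = v; in particular, whenever λ·Id − T is invertible, (λ·Id − T)⁻¹(v) = f. -/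
open scoped BigOperators ENNReal

noncomputable section

/-!
The sequences `λ^{-k}` and `m^{-k}` are geometric, so `S` maps each to a multiple of itself
(up to index `0`, where `f` vanishes), and `χ` of a geometric sequence `z^k` is
`(1 - z⁻¹) μ̂(z)`. For the ansatz `f = c (λ^{-k} - m^{-k})` the equation `(λ - T) f = v`
therefore reduces to the scalar identity `c (1 - λ) (1 - μ̂(1/λ)) = 1`, using `μ̂(1/m) = 1`.
Membership in `ℓ²_R` holds because `R/|λ|` and `R/m` are less than `1`, and the last claim
is `(λ - T) f = v` read in the `ℓ²` model.
-/

open Complex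

section Sequences

variable (μ : ℕ → ℝ)

theorem summable_ofReal_mul_pow_of_norm_le (hμ : ∀ k, 0 ≤ μ k) {r : ℝ}
    (hr : Summable fun k : ℕ => μ (k + 1) * r ^ (k + 1)) {z : ℂ} (hz : ‖z‖ ≤ r) :
    Summable fun k : ℕ => (μ (k + 1) : ℂ) * z ^ (k + 1) := by
  refine Summable.of_norm_bounded hr fun k => ?_
  rw [norm_mul, norm_pow, norm_real, Real.norm_of_nonneg (hμ _)]
  gcongr
  exact hμ _

theorem chiSum_pow (z : ℂ) (k : ℕ) :
    chiSum μ (fun k => z ^ k) k = (μ (k + 1) : ℂ) * z ^ k * (z - 1) := by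
  simp only [chiSum, pow_succ]
  ring

theorem hasSum_chiSum_pow {z s : ℂ} (hz : z ≠ 0)
    (h : HasSum (fun k : ℕ => (μ (k + 1) : ℂ) * z ^ (k + 1)) s) :
    HasSum (chiSum μ fun k => z ^ k) ((1 - z⁻¹) * s) := by
  have hterm : chiSum μ (fun k => z ^ k)
      = fun k => (1 - z⁻¹) * ((μ (k + 1) : ℂ) * z ^ (k + 1)) := by
    funext k
    rw [chiSum_pow, pow_succ]
    field_simp
  rw [hterm]
  exact h.mul_left _

theorem chiSum_const_mul_sub (c : ℂ) (a b : ℕ → ℂ) :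
    chiSum μ (fun k => c * (a k - b k)) = fun k => c * (chiSum μ a k - chiSum μ b k) := by
  funext k
  simp only [chiSum]
  ring

theorem hasSum_chiSum_const_mul_pow_sub_pow (c : ℂ) {z w s t : ℂ} (hz : z ≠ 0) (hw : w ≠ 0)
    (hs : HasSum (fun k : ℕ => (μ (k + 1) : ℂ) * z ^ (k + 1)) s)
    (ht : HasSum (fun k : ℕ => (μ (k + 1) : ℂ) * w ^ (k + 1)) t) :
    HasSum (chiSum μ fun k => c * (z ^ k - w ^ k))
      (c * ((1 - z⁻¹) * s - (1 - w⁻¹) * t)) := by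
  rw [chiSum_const_mul_sub]
  exact ((hasSum_chiSum_pow μ hz hs).sub (hasSum_chiSum_pow μ hw ht)).mul_left c

theorem mul_sub_Tseq_eq_vSeq {m : ℝ} (hm : (m : ℂ) ≠ 0) {lam c : ℂ} (hlam : lam ≠ 0)
    {f : ℕ → ℂ} (hf : ∀ k, f k = c * (lam⁻¹ ^ k - (m : ℂ)⁻¹ ^ k))
    (hχ : chiSeq μ f = c * (m - lam) - 1) (k : ℕ) :
    lam * f k - Tseq μ m f k = vSeq m k := by
  cases k with
  | zero => simp [Tseq, shiftSeq, vSeq, hf]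
  | succ n =>
    -- the terms `c λ^{-n}` cancel, leaving `m^{-n-1} (c (m - λ) - χ(f))`
    simp only [Tseq, shiftSeq, vSeq, hf, hχ, Nat.succ_ne_zero, if_false, Nat.add_sub_cancel,
      pow_succ]
    field_simp
    ring

end Sequences

section Model

theorem memℓp_pow_of_norm_lt_one {𝕜 : Type*} [NormedDivisionRing 𝕜] {p : ℝ≥0∞}
    (hp : 0 < p.toReal) {w : 𝕜} (hw : ‖w‖ < 1) : Memℓp (fun k : ℕ => w ^ k) p := by
  refine (memℓp_gen_iff hp).2 ?_
  simp_rw [norm_pow, ← Real.rpow_pow_comm (norm_nonneg w)]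
  exact summable_geometric_of_lt_one (by positivity)
    (Real.rpow_lt_one (norm_nonneg w) hw hp)

theorem memEllR_iff_memℓp_toModel (R : ℝ) (a : ℕ → ℂ) :
    memEllR R a ↔ Memℓp (toModel R a) 2 := by
  rw [memℓp_gen_iff (by norm_num), memEllR]
  congr! 2 with k
  rw [toModel, norm_mul, norm_pow, norm_real, Real.norm_eq_abs, ENNReal.toReal_ofNat,
    Real.rpow_two, mul_pow, ← pow_mul, mul_comm k 2, pow_mul, pow_mul, sq_abs]

theorem norm_ofReal_mul_inv_lt_one {R : ℝ} (hR : 0 ≤ R) {w : ℂ} (h : R < ‖w‖) :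
    ‖(R : ℂ) * w⁻¹‖ < 1 := by
  rw [norm_mul, norm_inv, norm_real, Real.norm_of_nonneg hR, ← div_eq_mul_inv,
    div_lt_one (hR.trans_lt h)]
  exact h

theorem memEllR_const_mul_inv_pow_sub {R : ℝ} (hR : 0 ≤ R) {a b : ℂ} (ha : R < ‖a‖)
    (hb : R < ‖b‖) (c : ℂ) : memEllR R fun k => c * (a⁻¹ ^ k - b⁻¹ ^ k) := by
  have hmodel : toModel R (fun k => c * (a⁻¹ ^ k - b⁻¹ ^ k))
      = c • ((fun k => ((R : ℂ) * a⁻¹) ^ k) - fun k => ((R : ℂ) * b⁻¹) ^ k) := by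
    funext k
    simp only [toModel, Pi.smul_apply, Pi.sub_apply, smul_eq_mul, mul_pow]
    ring
  rw [memEllR_iff_memℓp_toModel, hmodel]
  exact ((memℓp_pow_of_norm_lt_one (by norm_num) (norm_ofReal_mul_inv_lt_one hR ha)).sub
    (memℓp_pow_of_norm_lt_one (by norm_num) (norm_ofReal_mul_inv_lt_one hR hb))).const_smul c

theorem fromModel_toModel {R : ℝ} (hR : R ≠ 0) (a : ℕ → ℂ) :
    fromModel R (toModel R a) = a := by
  funext k
  simp [fromModel, toModel, hR]

end Model

section Operator

theorem Ring.inverse_apply_of_apply_eq {𝕜 E : Type*} [NontriviallyNormedField 𝕜]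
    [NormedAddCommGroup E] [NormedSpace 𝕜 E] {A : E →L[𝕜] E} (hA : IsUnit A) {x y : E}
    (h : A x = y) : Ring.inverse A y = x := by
  rw [← h, ← mul_apply_eq_comp, Ring.inverse_mul_cancel A hA, one_apply_eq_self]

theorem lp.algebraMap_sub_apply {𝕜 ι : Type*} [NontriviallyNormedField 𝕜] {p : ℝ≥0∞}
    [Fact (1 ≤ p)] (c : 𝕜) (A : lp (fun _ : ι => 𝕜) p →L[𝕜] lp (fun _ : ι => 𝕜) p)
    (b : lp (fun _ : ι => 𝕜) p) (i : ι) :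
    (algebraMap 𝕜 _ c - A) b i = c * b i - A b i := by
  simp only [Algebra.algebraMap_eq_smul_one, sub_apply, smul_apply, one_apply_eq_self,
    lp.coeFn_sub, lp.coeFn_smul, Pi.sub_apply, Pi.smul_apply, smul_eq_mul]

theorem Intertwines.ring_inverse_apply_eq {μ : ℕ → ℝ} {m R : ℝ} (hR : R ≠ 0)
    {T' : H2 →L[ℂ] H2} (hT : Intertwines μ m R T') {lam : ℂ}
    (hU : IsUnit (algebraMap ℂ (H2 →L[ℂ] H2) lam - T'))
    {f : ℕ → ℂ} (hres : ∀ k, lam * f k - Tseq μ m f k = vSeq m k) {vb fb : H2}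
    (hvb : ∀ k, (vb : ℕ → ℂ) k = toModel R (vSeq m) k)
    (hfb : ∀ k, (fb : ℕ → ℂ) k = toModel R f k) :
    Ring.inverse (algebraMap ℂ (H2 →L[ℂ] H2) lam - T') vb = fb := by
  have hfb' : fromModel R fb = f := by rw [funext hfb, fromModel_toModel hR]
  refine Ring.inverse_apply_of_apply_eq hU (lp.ext (funext fun k => ?_))
  rw [lp.algebraMap_sub_apply, hT, hfb', hvb, hfb]
  simp only [toModel, ← hres k]
  ring
end Operator

theorem statement6_general
    (μ : ℕ → ℝ) (m R : ℝ)
    (hμnn : ∀ k, 0 ≤ μ k)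
    (hμm : HasSum (fun k : ℕ => μ (k + 1) * (m⁻¹) ^ (k + 1)) 1)
    (hR1 : 1 ≤ R) (hRm : R < m)
    (hμR : Summable fun k : ℕ => μ (k + 1) * (R⁻¹) ^ (k + 1))
    (lam : ℂ) (hlam : R < ‖lam‖) (hroot : genFun μ lam⁻¹ ≠ 1)
    (f : ℕ → ℂ)
    (hf : f = fun k => (1 - lam)⁻¹ * (1 - genFun μ lam⁻¹)⁻¹ * (lam⁻¹ ^ k - ((m : ℂ))⁻¹ ^ k)) :
    memEllR R f ∧
    Summable (chiSum μ f) ∧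
    (∀ k, lam * f k - Tseq μ m f k = vSeq m k) ∧
    (∀ T' : H2 →L[ℂ] H2, Intertwines μ m R T' →
      IsUnit (algebraMap ℂ (H2 →L[ℂ] H2) lam - T') →
      ∀ vb fb : H2, (∀ k, (vb : ℕ → ℂ) k = toModel R (vSeq m) k) →
        (∀ k, (fb : ℕ → ℂ) k = toModel R f k) →
        Ring.inverse (algebraMap ℂ (H2 →L[ℂ] H2) lam - T') vb = fb) := by
  have hR0 : 0 < R := one_pos.trans_le hR1
  have hRm_norm : R < ‖(m : ℂ)‖ := by rwa [norm_real, Real.norm_of_nonneg (hR0.trans hRm).le]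
  have hm0 : (m : ℂ) ≠ 0 := ofReal_ne_zero.2 (hR0.trans hRm).ne'
  have hlam0 : lam ≠ 0 := norm_pos_iff.1 (hR0.trans hlam)
  have hlam1 : 1 - lam ≠ 0 := fun h => by
    rw [← sub_eq_zero.1 h, norm_one] at hlam
    linarith
  set g := genFun μ lam⁻¹
  have hg1 : 1 - g ≠ 0 := sub_ne_zero.2 hroot.symm
  set c := (1 - lam)⁻¹ * (1 - g)⁻¹ with hc
  have hgen : HasSum (fun k => (μ (k + 1) : ℂ) * lam⁻¹ ^ (k + 1)) g :=
    (summable_ofReal_mul_pow_of_norm_le μ hμnn hμR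
      (by rw [norm_inv]; exact inv_anti₀ hR0 hlam.le)).hasSum
  have hgen_m : HasSum (fun k => (μ (k + 1) : ℂ) * (m : ℂ)⁻¹ ^ (k + 1)) 1 := by
    have h := hasSum_ofReal.2 hμm
    push_cast at h
    exact h
  have hχ : HasSum (chiSum μ f) (c * ((1 - lam) * g - (1 - m) * 1)) := by
    simpa only [hf, inv_inv] using hasSum_chiSum_const_mul_pow_sub_pow μ c
      (inv_ne_zero hlam0) (inv_ne_zero hm0) hgen hgen_m
  have hχeq : chiSeq μ f = c * (m - lam) - 1 := by
    have hc_mul : c * (1 - lam) * (1 - g) = 1 := by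
      rw [hc]
      field_simp
    rw [chiSeq, hχ.tsum_eq]
    linear_combination -hc_mul
  have hres := mul_sub_Tseq_eq_vSeq μ hm0 hlam0 (fun k => by rw [hf]) hχeq
  refine ⟨hf ▸ memEllR_const_mul_inv_pow_sub hR0.le hlam hRm_norm c, hχ.summable, hres, ?_⟩
  intro T' hT hU vb fb hvb hfb
  exact hT.ring_inverse_apply_eq hR0.ne' hU hres hvb hfb

/-- If `|λ| > R` and `μ̂(1/λ) ≠ 1`, then
`f_k = (1−λ)⁻¹ (1−μ̂(1/λ))⁻¹ (λ^{-k} − m^{-k})` lies in `ℓ²_R` and `(λ·Id − T) f = v`;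
in particular, whenever `λ·Id − T` is invertible, `(λ·Id − T)⁻¹ v = f`. -/
theorem statement6
    (μ : ℕ → ℝ) (m R : ℝ)
    (hm : 1 < m) (hμnn : ∀ k, 0 ≤ μ k)
    (hμm : HasSum (fun k : ℕ => μ (k + 1) * (m⁻¹) ^ (k + 1)) 1)
    (hR1 : 1 ≤ R) (hRm : R < m)
    (hμR : Summable fun k : ℕ => μ (k + 1) * (R⁻¹) ^ (k + 1))
    (lam : ℂ) (hlam : R < ‖lam‖) (hroot : genFun μ lam⁻¹ ≠ 1)
    (f : ℕ → ℂ)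
    (hf : f = fun k => (1 - lam)⁻¹ * (1 - genFun μ lam⁻¹)⁻¹ * (lam⁻¹ ^ k - ((m : ℂ))⁻¹ ^ k)) :
    memEllR R f ∧
    Summable (chiSum μ f) ∧
    (∀ k, lam * f k - Tseq μ m f k = vSeq m k) ∧
    (∀ T' : H2 →L[ℂ] H2, Intertwines μ m R T' →
      IsUnit (algebraMap ℂ (H2 →L[ℂ] H2) lam - T') →
      ∀ vb fb : H2, (∀ k, (vb : ℕ → ℂ) k = toModel R (vSeq m) k) →
        (∀ k, (fb : ℕ → ℂ) k = toModel R f k) →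
        Ring.inverse (algebraMap ℂ (H2 →L[ℂ] H2) lam - T') vb = fb) :=
  statement6_general μ m R hμnn hμm hR1 hRm hμR lam hlam hroot f hf
end
end
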